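/- Let τ ∈ Δ and φ ∈ ℝ, and let S₁ = {F_t}_{t≥0} be the group of elliptic automorphisms F_t(z) = m_τ(e^{iφt}·m_τ(z)). Let S₂ = {G_t}_{t≥0} be a one-parameter continuous semigroup on Δ such that for each t > 0 the map G_t is not an automorphism of Δ. If F₁(G₁(z)) = G₁(F₁(z)) for all z ∈ Δ, then F₁(G_t(z)) = G_t(F₁(z)) for all t ≥ 0 and all z ∈ Δ. -/

import Mathlib

open Complex Filter Set

noncomputable section

/-- The open unit disk in the complex plane. -/
def unitDisk : Set ℂ := {z : ℂ | ‖z‖ < 1}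

/-- The Stolz angle at a boundary point `τ` with half-opening `α`. -/
def stolzAngle (τ : ℂ) (α : ℝ) : Set ℂ :=
  {z ∈ unitDisk | |Complex.arg (1 - (starRingEnd ℂ) τ * z)| < α}

/-- `h` has angular limit `L` at `τ`: `h z → L` as `z → τ` in every Stolz angle. -/
def AngularLimit (h : ℂ → ℂ) (τ L : ℂ) : Prop :=
  ∀ α : ℝ, 0 < α → α < Real.pi / 2 →
    Tendsto h (nhdsWithin τ (stolzAngle τ α)) (nhds L)

/-- A one-parameter continuous semigroup of holomorphic self-mappings of the unit disk. -/
structure ContSemigroupOn (F : ℝ → ℂ → ℂ) : Prop where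
  holo : ∀ t : ℝ, 0 ≤ t → DifferentiableOn ℂ (F t) unitDisk
  maps : ∀ t : ℝ, 0 ≤ t → MapsTo (F t) unitDisk unitDisk
  comp : ∀ s : ℝ, 0 ≤ s → ∀ t : ℝ, 0 ≤ t → ∀ z ∈ unitDisk, F (t + s) z = F t (F s z)
  cont : ∀ z ∈ unitDisk, Tendsto (fun t : ℝ => F t z) (nhdsWithin 0 (Set.Ioi 0)) (nhds z)

/-- `f` is the infinitesimal generator of the semigroup `F`:
for each `z ∈ Δ`, `u(t) = F t z` solves `u' + f(u) = 0`, `u 0 = z`. -/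
def Generates (f : ℂ → ℂ) (F : ℝ → ℂ → ℂ) : Prop :=
  ∀ z ∈ unitDisk, F 0 z = z ∧
    ∀ t : ℝ, 0 ≤ t →
      HasDerivWithinAt (fun s : ℝ => F s z) (-(f (F t z))) (Set.Ici 0) t

/-- `τ` is a boundary null point of `f`: `f (r τ) → 0` as `r → 1⁻`. -/
def BoundaryNullPoint (f : ℂ → ℂ) (τ : ℂ) : Prop :=
  Tendsto (fun r : ℝ => f ((r : ℂ) * τ)) (nhdsWithin 1 (Set.Iio 1)) (nhds 0)

/-- An automorphism of the unit disk: a holomorphic bijection of the disk onto itself. -/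
def IsDiskAutomorphism (F : ℂ → ℂ) : Prop :=
  DifferentiableOn ℂ F unitDisk ∧ BijOn F unitDisk unitDisk

/-- The Möbius involution `m_τ(z) = (τ - z)/(1 - τ̄ z)`. -/
def mobius (τ z : ℂ) : ℂ := (τ - z) / (1 - (starRingEnd ℂ) τ * z)

/-!
Conjugating by `m_τ` turns `F₁` into the rotation `R w = e^{iφ} w` and `G_t` into a semigroup
`g_t`. If `e^{iφ} ≠ 1`, then `R ∘ g₁ = g₁ ∘ R` forces `g₁ 0 = 0`. As `g₁` is not an automorphism,
Schwarz's lemma makes `0` its only fixed point, so every `g_t` fixes `0` (`g_t 0` is fixed by `g₁`),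
and `λ = g₁'(0)` has `|λ| < 1`; `λ ≠ 0` because `λ = (g_{1/n}'(0))ⁿ` while `g_s → id` as `s → 0`.
Now `u = g_t ∘ R` and `v = R ∘ g_t` both commute with `g₁`, fix `0` and have the same derivative
there. If `u - v` vanished to some finite order `k ≥ 2` at `0`, comparing the leading terms of
`u ∘ g₁ - v ∘ g₁ = g₁ ∘ u - g₁ ∘ v` would give `λᵏ = λ`, which is impossible; hence `u = v`.
-/

open scoped Topology

theorem unitDisk_eq_ball : unitDisk = Metric.ball 0 1 := by
  ext z; simp [unitDisk]

theorem isOpen_unitDisk : IsOpen unitDisk := unitDisk_eq_ball ▸ Metric.isOpen_ball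

theorem zero_mem_unitDisk : (0 : ℂ) ∈ unitDisk := by simp [unitDisk]

theorem mul_mem_unitDisk {a z : ℂ} (ha : ‖a‖ ≤ 1) (hz : z ∈ unitDisk) : a * z ∈ unitDisk :=
  show ‖a * z‖ < 1 by rw [norm_mul]; exact (mul_le_of_le_one_left (norm_nonneg z) ha).trans_lt hz

section Mobius

variable {τ : ℂ}

theorem one_sub_conj_mul_ne_zero (hτ : τ ∈ unitDisk) {z : ℂ} (hz : z ∈ unitDisk) :
    1 - starRingEnd ℂ τ * z ≠ 0 := by
  refine sub_ne_zero.2 (Ne.symm (ne_of_apply_ne norm ?_))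
  rw [norm_mul, Complex.norm_conj, norm_one]
  exact (mul_lt_one_of_nonneg_of_lt_one_left (norm_nonneg τ) hτ hz.le).ne

theorem mapsTo_mobius (hτ : τ ∈ unitDisk) : MapsTo (mobius τ) unitDisk unitDisk := by
  intro z hz
  have hτ' : Complex.normSq τ < 1 := by
    rw [← Complex.sq_norm]; exact pow_lt_one₀ (norm_nonneg τ) hτ two_ne_zero
  have hz' : Complex.normSq z < 1 := by
    rw [← Complex.sq_norm]; exact pow_lt_one₀ (norm_nonneg z) hz two_ne_zero
  have key : Complex.normSq (1 - starRingEnd ℂ τ * z) - Complex.normSq (τ - z)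
      = (1 - Complex.normSq τ) * (1 - Complex.normSq z) := by
    simp only [Complex.normSq_apply, Complex.sub_re, Complex.sub_im, Complex.mul_re,
      Complex.mul_im, Complex.one_re, Complex.one_im, Complex.conj_re, Complex.conj_im]
    ring
  have hlt : Complex.normSq (τ - z) < Complex.normSq (1 - starRingEnd ℂ τ * z) := by
    nlinarith
  show ‖mobius τ z‖ < 1
  rw [mobius, norm_div, div_lt_one (norm_pos_iff.2 (one_sub_conj_mul_ne_zero hτ hz)),
    ← sq_lt_sq₀ (norm_nonneg _) (norm_nonneg _), Complex.sq_norm, Complex.sq_norm]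
  exact hlt

theorem mobius_mobius (hτ : τ ∈ unitDisk) {z : ℂ} (hz : z ∈ unitDisk) :
    mobius τ (mobius τ z) = z := by
  have hd := one_sub_conj_mul_ne_zero hτ hz
  have hd' := one_sub_conj_mul_ne_zero hτ (mapsTo_mobius hτ hz)
  simp only [mobius] at hd' ⊢
  rw [div_eq_iff hd']
  linear_combination (z - τ) * mul_inv_cancel₀ hd

theorem differentiableOn_mobius (hτ : τ ∈ unitDisk) :
    DifferentiableOn ℂ (mobius τ) unitDisk :=
  ((differentiableOn_const τ).sub differentiableOn_id).div
    ((differentiableOn_const 1).sub ((differentiableOn_const _).mul differentiableOn_id))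
    fun _ hz => one_sub_conj_mul_ne_zero hτ hz

end Mobius

def conjMobius (τ : ℂ) (f : ℂ → ℂ) : ℂ → ℂ := fun z => mobius τ (f (mobius τ z))

section ConjMobius

variable {τ : ℂ} {f : ℂ → ℂ}

theorem mapsTo_conjMobius (hτ : τ ∈ unitDisk) (hf : MapsTo f unitDisk unitDisk) :
    MapsTo (conjMobius τ f) unitDisk unitDisk :=
  (mapsTo_mobius hτ).comp (hf.comp (mapsTo_mobius hτ))

theorem differentiableOn_conjMobius (hτ : τ ∈ unitDisk) (hf : DifferentiableOn ℂ f unitDisk)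
    (hf' : MapsTo f unitDisk unitDisk) : DifferentiableOn ℂ (conjMobius τ f) unitDisk :=
  (differentiableOn_mobius hτ).comp (hf.comp (differentiableOn_mobius hτ) (mapsTo_mobius hτ))
    (hf'.comp (mapsTo_mobius hτ))

theorem conjMobius_conjMobius (hτ : τ ∈ unitDisk) (hf : MapsTo f unitDisk unitDisk) :
    EqOn (conjMobius τ (conjMobius τ f)) f unitDisk := fun z hz => by
  simp only [conjMobius]
  rw [mobius_mobius hτ hz, mobius_mobius hτ (hf hz)]

theorem commute_conjMobius {g : ℂ → ℂ} (hτ : τ ∈ unitDisk) (hf : MapsTo f unitDisk unitDisk)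
    (hg : MapsTo g unitDisk unitDisk)
    (h : ∀ z ∈ unitDisk, conjMobius τ f (g z) = g (conjMobius τ f z)) :
    ∀ z ∈ unitDisk, conjMobius τ g (f z) = f (conjMobius τ g z) := by
  intro z hz
  have hmz := mapsTo_mobius hτ hz
  have h' := congrArg (mobius τ) (h (mobius τ z) hmz)
  simp only [conjMobius, mobius_mobius hτ hz] at h' ⊢
  rwa [mobius_mobius hτ (hf (mapsTo_mobius hτ (hg hmz))), eq_comm] at h'

end ConjMobius

section Automorphism

theorem IsDiskAutomorphism.congr {f g : ℂ → ℂ} (hf : IsDiskAutomorphism f)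
    (h : EqOn f g unitDisk) : IsDiskAutomorphism g :=
  ⟨hf.1.congr h.symm, (EqOn.bijOn_iff h).1 hf.2⟩

theorem IsDiskAutomorphism.comp {f g : ℂ → ℂ} (hf : IsDiskAutomorphism f)
    (hg : IsDiskAutomorphism g) : IsDiskAutomorphism (f ∘ g) :=
  ⟨hf.1.comp hg.1 hg.2.mapsTo, hf.2.comp hg.2⟩

theorem isDiskAutomorphism_const_mul {c : ℂ} (hc : ‖c‖ = 1) :
    IsDiskAutomorphism (c * ·) := by
  have hc0 : c ≠ 0 := norm_ne_zero_iff.1 (by rw [hc]; exact one_ne_zero)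
  refine ⟨(differentiableOn_const c).mul differentiableOn_id, InvOn.bijOn (f' := (c⁻¹ * ·))
    ⟨fun z _ => inv_mul_cancel_left₀ hc0 z, fun z _ => mul_inv_cancel_left₀ hc0 z⟩
    (fun z hz => mul_mem_unitDisk hc.le hz) (fun z hz => mul_mem_unitDisk ?_ hz)⟩
  rw [norm_inv, hc, inv_one]

theorem isDiskAutomorphism_mobius {τ : ℂ} (hτ : τ ∈ unitDisk) :
    IsDiskAutomorphism (mobius τ) :=
  ⟨differentiableOn_mobius hτ, InvOn.bijOn ⟨fun _ hz => mobius_mobius hτ hz,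
    fun _ hz => mobius_mobius hτ hz⟩ (mapsTo_mobius hτ) (mapsTo_mobius hτ)⟩

theorem IsDiskAutomorphism.conjMobius {τ : ℂ} {f : ℂ → ℂ} (hτ : τ ∈ unitDisk)
    (hf : IsDiskAutomorphism f) : IsDiskAutomorphism (conjMobius τ f) :=
  (isDiskAutomorphism_mobius hτ).comp (hf.comp (isDiskAutomorphism_mobius hτ))

theorem IsDiskAutomorphism.of_conjMobius {τ : ℂ} {f : ℂ → ℂ} (hτ : τ ∈ unitDisk)
    (hf : MapsTo f unitDisk unitDisk) (h : IsDiskAutomorphism (_root_.conjMobius τ f)) :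
    IsDiskAutomorphism f :=
  (h.conjMobius hτ).congr (conjMobius_conjMobius hτ hf)

end Automorphism

theorem ContSemigroupOn.conjMobius {τ : ℂ} {G : ℝ → ℂ → ℂ} (hτ : τ ∈ unitDisk)
    (hG : ContSemigroupOn G) : ContSemigroupOn fun t => conjMobius τ (G t) where
  holo t ht := differentiableOn_conjMobius hτ (hG.holo t ht) (hG.maps t ht)
  maps t ht := mapsTo_conjMobius hτ (hG.maps t ht)
  comp s hs t ht z hz := by
    simp only [_root_.conjMobius]
    rw [mobius_mobius hτ (hG.maps s hs (mapsTo_mobius hτ hz)),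
      hG.comp s hs t ht _ (mapsTo_mobius hτ hz)]
  cont z hz := by
    have hmz := mapsTo_mobius hτ hz
    have hcont : ContinuousAt (mobius τ) (mobius τ z) :=
      ((differentiableOn_mobius hτ).differentiableAt (isOpen_unitDisk.mem_nhds hmz)).continuousAt
    have h := hcont.tendsto.comp (hG.cont _ hmz)
    rwa [mobius_mobius hτ hz] at h

section Schwarz

variable {f : ℂ → ℂ}

theorem mapsTo_ball_closedBall_of_mapsTo_unitDisk (hm : MapsTo f unitDisk unitDisk)
    (h0 : f 0 = 0) : MapsTo f (Metric.ball 0 1) (Metric.closedBall (f 0) 1) := by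
  rw [h0, ← unitDisk_eq_ball]
  exact hm.mono_right (unitDisk_eq_ball ▸ Metric.ball_subset_closedBall)

theorem norm_deriv_le_one_of_mapsTo_unitDisk (hd : DifferentiableOn ℂ f unitDisk)
    (hm : MapsTo f unitDisk unitDisk) (h0 : f 0 = 0) : ‖deriv f 0‖ ≤ 1 :=
  Complex.norm_deriv_le_one_of_mapsTo_ball (unitDisk_eq_ball ▸ hd)
    (mapsTo_ball_closedBall_of_mapsTo_unitDisk hm h0) one_pos

theorem norm_le_sq_of_deriv_eq_zero (hd : DifferentiableOn ℂ f unitDisk)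
    (hm : MapsTo f unitDisk unitDisk) (h0 : f 0 = 0) (h' : deriv f 0 = 0) {z : ℂ}
    (hz : z ∈ unitDisk) : ‖f z‖ ≤ ‖z‖ ^ 2 := by
  rw [unitDisk_eq_ball] at hd hz
  have hn : (f · - f 0) =o[𝓝 0] (fun w => ‖w - 0‖ ^ 1) := by
    have hf := (hd.differentiableAt (Metric.ball_mem_nhds 0 one_pos)).hasDerivAt
    rw [h', hasDerivAt_iff_isLittleO] at hf
    simpa using hf.norm_right
  simpa [h0] using Complex.dist_le_mul_div_pow_of_mapsTo_ball_of_isLittleO hd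
    (mapsTo_ball_closedBall_of_mapsTo_unitDisk hm h0) hn hz

theorem eqOn_mul_of_norm_dslope_eq_one (hd : DifferentiableOn ℂ f unitDisk)
    (hm : MapsTo f unitDisk unitDisk) (h0 : f 0 = 0) {w : ℂ} (hw : w ∈ unitDisk)
    (h : ‖dslope f 0 w‖ = 1) : EqOn f (dslope f 0 w * ·) unitDisk := by
  rw [unitDisk_eq_ball] at hd hw ⊢
  have := Complex.affine_of_mapsTo_ball_of_norm_dslope_eq_div hd
    (mapsTo_ball_closedBall_of_mapsTo_unitDisk hm h0) hw (by rw [h, div_one])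
  simpa [h0, mul_comm] using this

theorem norm_dslope_ne_one_of_not_isDiskAutomorphism (hd : DifferentiableOn ℂ f unitDisk)
    (hm : MapsTo f unitDisk unitDisk) (h0 : f 0 = 0) (hf : ¬ IsDiskAutomorphism f) {w : ℂ}
    (hw : w ∈ unitDisk) : ‖dslope f 0 w‖ ≠ 1 := fun h =>
  hf ((isDiskAutomorphism_const_mul h).congr (eqOn_mul_of_norm_dslope_eq_one hd hm h0 hw h).symm)

theorem norm_deriv_lt_one_of_not_isDiskAutomorphism (hd : DifferentiableOn ℂ f unitDisk)
    (hm : MapsTo f unitDisk unitDisk) (h0 : f 0 = 0) (hf : ¬ IsDiskAutomorphism f) :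
    ‖deriv f 0‖ < 1 :=
  (norm_deriv_le_one_of_mapsTo_unitDisk hd hm h0).lt_of_ne <| by
    simpa using norm_dslope_ne_one_of_not_isDiskAutomorphism hd hm h0 hf zero_mem_unitDisk

theorem eq_zero_of_apply_eq_self_of_not_isDiskAutomorphism (hd : DifferentiableOn ℂ f unitDisk)
    (hm : MapsTo f unitDisk unitDisk) (h0 : f 0 = 0) (hf : ¬ IsDiskAutomorphism f) {w : ℂ}
    (hw : w ∈ unitDisk) (hfw : f w = w) : w = 0 := by
  by_contra hw0
  apply norm_dslope_ne_one_of_not_isDiskAutomorphism hd hm h0 hf hw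
  rw [dslope_of_ne _ hw0, slope_def_field, hfw, h0, sub_zero, div_self hw0, norm_one]

end Schwarz

section Rigidity

open Asymptotics

theorem two_le_of_eventuallyEq_pow_mul {d q : ℂ → ℂ} {k : ℕ} (hq : DifferentiableAt ℂ q 0)
    (hq0 : q 0 ≠ 0) (hd : ∀ᶠ z in 𝓝 0, d z = z ^ k * q z) (hd0 : d 0 = 0)
    (hd' : deriv d 0 = 0) : 2 ≤ k := by
  rcases k with _ | _ | k
  · rw [hd.self_of_nhds, pow_zero, one_mul] at hd0
    exact absurd hd0 hq0
  · have hderiv : HasDerivAt d (q 0) 0 := by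
      have h := (hasDerivAt_id (0 : ℂ)).mul hq.hasDerivAt
      simp only [id, one_mul, zero_mul, add_zero] at h
      exact h.congr_of_eventuallyEq (hd.mono fun z hz => by simpa using hz)
    exact absurd (hderiv.deriv ▸ hd') hq0
  · omega

theorem HasStrictDerivAt.isLittleO_comp_sub_comp {g : ℂ → ℂ} {μ x : ℂ} {α : Type*}
    {l : Filter α} (hg : HasStrictDerivAt g μ x) {u v : α → ℂ} (hu : Tendsto u l (𝓝 x))
    (hv : Tendsto v l (𝓝 x)) :
    (fun a => g (u a) - g (v a) - μ * (u a - v a)) =o[l] fun a => u a - v a := by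
  simpa [Function.comp_def, mul_comm] using
    hg.hasStrictFDerivAt.isLittleO.comp_tendsto (hu.prodMk_nhds hv)

theorem eventuallyEq_of_commute_of_deriv_eq {g u v : ℂ → ℂ} {μ : ℂ}
    (hg : HasStrictDerivAt g μ 0) (hg0 : g 0 = 0) (hμ0 : μ ≠ 0) (hμ : ¬ IsOfFinOrder μ)
    (hu : AnalyticAt ℂ u 0) (hv : AnalyticAt ℂ v 0) (hu0 : u 0 = 0) (hv0 : v 0 = 0)
    (hug : ∀ᶠ z in 𝓝 0, u (g z) = g (u z)) (hvg : ∀ᶠ z in 𝓝 0, v (g z) = g (v z))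
    (huv : deriv u 0 = deriv v 0) : u =ᶠ[𝓝 0] v := by
  by_contra hne
  obtain ⟨k, q, hq, hq0, hd⟩ := (hu.sub hv).exists_eventuallyEq_pow_smul_nonzero_iff.2
    fun h => hne (h.mono fun z hz => sub_eq_zero.1 hz)
  simp only [Pi.sub_apply, sub_zero, smul_eq_mul] at hd
  have hk : 2 ≤ k := two_le_of_eventuallyEq_pow_mul hq.differentiableAt hq0 hd
    (by rw [hu0, hv0, sub_zero])
    (by rw [deriv_fun_sub hu.differentiableAt hv.differentiableAt, huv, sub_self])
  have hg_tendsto : Tendsto g (𝓝 0) (𝓝 0) := by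
    simpa only [hg0] using hg.hasDerivAt.continuousAt.tendsto
  have hbig : (fun z => u z - v z) =O[𝓝 0] (fun z => z ^ k) := by
    refine (((isBigO_refl (fun z : ℂ => z ^ k) _).mul
      (hq.continuousAt.tendsto.isBigO_one ℂ)).congr' (hd.mono fun z hz => hz.symm) ?_)
    simp only [mul_one]; rfl
  have hsmall : (fun z => (u (g z) - v (g z)) - μ * (u z - v z)) =o[𝓝 0] (fun z => z ^ k) := by
    have hut : Tendsto u (𝓝 0) (𝓝 0) := by simpa only [hu0] using hu.continuousAt.tendsto
    have hvt : Tendsto v (𝓝 0) (𝓝 0) := by simpa only [hv0] using hv.continuousAt.tendsto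
    refine ((hg.isLittleO_comp_sub_comp hut hvt).trans_isBigO hbig).congr' ?_ EventuallyEq.rfl
    filter_upwards [hug, hvg] with z hu' hv'
    rw [hu', hv']
  have hlim₀ : Tendsto (fun z => ((u (g z) - v (g z)) - μ * (u z - v z)) / z ^ k)
      (𝓝[≠] 0) (𝓝 0) :=
    hsmall.tendsto_div_nhds_zero.mono_left nhdsWithin_le_nhds
  have hslope : Tendsto (fun z => g z / z) (𝓝[≠] 0) (𝓝 μ) := by
    simpa only [slope_fun_def_field, hg0, sub_zero] using
      hasDerivAt_iff_tendsto_slope.1 hg.hasDerivAt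
  have hlim : Tendsto (fun z => (g z / z) ^ k * q (g z) - μ * q z) (𝓝[≠] 0)
      (𝓝 (μ ^ k * q 0 - μ * q 0)) :=
    ((hslope.pow k).mul ((hq.continuousAt.tendsto.comp hg_tendsto).mono_left
      nhdsWithin_le_nhds)).sub
      (tendsto_const_nhds.mul (hq.continuousAt.tendsto.mono_left nhdsWithin_le_nhds))
  have hquot : (fun z => ((u (g z) - v (g z)) - μ * (u z - v z)) / z ^ k)
      =ᶠ[𝓝[≠] 0] fun z => (g z / z) ^ k * q (g z) - μ * q z := by
    filter_upwards [self_mem_nhdsWithin, nhdsWithin_le_nhds (hg_tendsto.eventually hd),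
      nhdsWithin_le_nhds hd] with z (hz : z ≠ 0) hdg hdz
    rw [hdg, hdz, div_pow]
    field_simp
  have hfixed : μ ^ k * q 0 - μ * q 0 = 0 := (tendsto_nhds_unique (hlim₀.congr' hquot) hlim).symm
  obtain ⟨j, rfl⟩ : ∃ j, k = j + 2 := ⟨k - 2, by omega⟩
  refine hμ (isOfFinOrder_iff_pow_eq_one.2 ⟨j + 1, j.succ_pos, ?_⟩)
  have h : μ * q 0 * (μ ^ (j + 1) - 1) = 0 := by linear_combination hfixed
  exact sub_eq_zero.1 ((mul_eq_zero.1 h).resolve_left (mul_ne_zero hμ0 hq0))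

theorem eqOn_of_commute_of_deriv_eq {g u v : ℂ → ℂ}
    (hg : DifferentiableOn ℂ g unitDisk) (hg0 : g 0 = 0) (hμ0 : deriv g 0 ≠ 0)
    (hμ : ¬ IsOfFinOrder (deriv g 0))
    (hu : DifferentiableOn ℂ u unitDisk) (hv : DifferentiableOn ℂ v unitDisk)
    (hu0 : u 0 = 0) (hv0 : v 0 = 0)
    (hug : ∀ z ∈ unitDisk, u (g z) = g (u z)) (hvg : ∀ z ∈ unitDisk, v (g z) = g (v z))
    (huv : deriv u 0 = deriv v 0) : EqOn u v unitDisk := by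
  have hD : unitDisk ∈ 𝓝 (0 : ℂ) := isOpen_unitDisk.mem_nhds zero_mem_unitDisk
  have hu' := hu.analyticOnNhd isOpen_unitDisk
  have hv' := hv.analyticOnNhd isOpen_unitDisk
  refine hu'.eqOn_of_preconnected_of_eventuallyEq hv'
    (unitDisk_eq_ball ▸ (convex_ball (0 : ℂ) 1).isPreconnected) zero_mem_unitDisk ?_
  exact eventuallyEq_of_commute_of_deriv_eq
    ((hg.analyticOnNhd isOpen_unitDisk 0 zero_mem_unitDisk).hasStrictDerivAt) hg0 hμ0 hμ
    (hu' 0 zero_mem_unitDisk) (hv' 0 zero_mem_unitDisk) hu0 hv0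
    (eventually_of_mem hD hug) (eventually_of_mem hD hvg) huv

end Rigidity

namespace ContSemigroupOn

variable {g : ℝ → ℂ → ℂ}

theorem apply_comm (hg : ContSemigroupOn g) {s t : ℝ} (hs : 0 ≤ s) (ht : 0 ≤ t) {z : ℂ}
    (hz : z ∈ unitDisk) : g s (g t z) = g t (g s z) := by
  rw [← hg.comp t ht s hs z hz, add_comm, hg.comp s hs t ht z hz]

theorem apply_zero_eq_zero (hg : ContSemigroupOn g) {t : ℝ} (ht : 0 ≤ t) (ht0 : g t 0 = 0)
    (hfix : ∀ w ∈ unitDisk, g t w = w → w = 0) {s : ℝ} (hs : 0 ≤ s) : g s 0 = 0 :=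
  hfix _ (hg.maps s hs zero_mem_unitDisk) (by rw [hg.apply_comm ht hs zero_mem_unitDisk, ht0])

theorem deriv_apply_add (hg : ContSemigroupOn g) (h0 : ∀ s, 0 ≤ s → g s 0 = 0) {s t : ℝ}
    (hs : 0 ≤ s) (ht : 0 ≤ t) : deriv (g (t + s)) 0 = deriv (g t) 0 * deriv (g s) 0 := by
  have hD : unitDisk ∈ 𝓝 (0 : ℂ) := isOpen_unitDisk.mem_nhds zero_mem_unitDisk
  have hcomp : g (t + s) =ᶠ[𝓝 0] g t ∘ g s := eventually_of_mem hD (hg.comp s hs t ht)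
  have hdt : DifferentiableAt ℂ (g t) (g s 0) := (hg.holo t ht).differentiableAt (by rwa [h0 s hs])
  rw [hcomp.deriv_eq, deriv_comp _ hdt ((hg.holo s hs).differentiableAt hD), h0 s hs]

theorem deriv_apply_nat_succ_mul (hg : ContSemigroupOn g) (h0 : ∀ s, 0 ≤ s → g s 0 = 0)
    {s : ℝ} (hs : 0 ≤ s) (n : ℕ) : deriv (g ((n + 1) * s)) 0 = deriv (g s) 0 ^ (n + 1) := by
  induction n with
  | zero => simp
  | succ n ih =>
    rw [show ((n + 1 : ℕ) + 1 : ℝ) * s = (n + 1) * s + s by push_cast; ring,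
      hg.deriv_apply_add h0 hs (by positivity), ih, pow_succ _ (n + 1)]

theorem deriv_apply_ne_zero (hg : ContSemigroupOn g) (h0 : ∀ s, 0 ≤ s → g s 0 = 0) {t : ℝ}
    (ht : 0 < t) : deriv (g t) 0 ≠ 0 := by
  intro hzero
  set s : ℕ → ℝ := fun n => t / (n + 1)
  have hs : ∀ n, 0 < s n := fun n => by positivity
  have hderiv : ∀ n, deriv (g (s n)) 0 = 0 := fun n => by
    refine pow_eq_zero_iff n.succ_ne_zero |>.1 ?_
    rw [← hg.deriv_apply_nat_succ_mul h0 (hs n).le, mul_div_cancel₀ _ n.cast_add_one_ne_zero,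
      hzero]
  have hw : (2⁻¹ : ℂ) ∈ unitDisk := by norm_num [unitDisk]
  have hbound : ∀ n, ‖g (s n) 2⁻¹‖ ≤ ‖(2⁻¹ : ℂ)‖ ^ 2 := fun n =>
    norm_le_sq_of_deriv_eq_zero (hg.holo _ (hs n).le) (hg.maps _ (hs n).le) (h0 _ (hs n).le)
      (hderiv n) hw
  have hs_tendsto : Tendsto s atTop (𝓝[>] 0) := by
    refine tendsto_nhdsWithin_iff.2 ⟨?_, Eventually.of_forall hs⟩
    have h := tendsto_one_div_add_atTop_nhds_zero_nat.const_mul t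
    simp only [mul_zero, mul_one_div] at h
    exact h
  have hle := le_of_tendsto ((hg.cont _ hw).comp hs_tendsto).norm (Eventually.of_forall hbound)
  norm_num at hle

theorem commute_of_commute_one (hg : ContSemigroupOn g) (h0 : ∀ s, 0 ≤ s → g s 0 = 0)
    (hμ : ‖deriv (g 1) 0‖ < 1) {h : ℂ → ℂ} (hd : DifferentiableOn ℂ h unitDisk)
    (hm : MapsTo h unitDisk unitDisk) (hh0 : h 0 = 0)
    (hcomm : ∀ z ∈ unitDisk, h (g 1 z) = g 1 (h z)) {t : ℝ} (ht : 0 ≤ t) :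
    ∀ z ∈ unitDisk, h (g t z) = g t (h z) := by
  have hD : unitDisk ∈ 𝓝 (0 : ℂ) := isOpen_unitDisk.mem_nhds zero_mem_unitDisk
  have hdt : DifferentiableAt ℂ (g t) (h 0) := (hg.holo t ht).differentiableAt (by rwa [hh0])
  have hdh : DifferentiableAt ℂ h (g t 0) := hd.differentiableAt (by rwa [h0 t ht])
  refine eqOn_of_commute_of_deriv_eq (hg.holo 1 zero_le_one) (h0 1 zero_le_one)
    (hg.deriv_apply_ne_zero h0 one_pos) (fun h => hμ.ne h.norm_eq_one)
    (hd.comp (hg.holo t ht) (hg.maps t ht)) ((hg.holo t ht).comp hd hm)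
    (by simp [h0 t ht, hh0]) (by simp [h0 t ht, hh0]) (fun z hz => ?_) (fun z hz => ?_) ?_
  · rw [hg.apply_comm ht zero_le_one hz, hcomm _ (hg.maps t ht hz)]
  · rw [hcomm z hz, hg.apply_comm ht zero_le_one (hm hz)]
  · change deriv (h ∘ g t) 0 = deriv (g t ∘ h) 0
    rw [deriv_comp _ hdh (hg.holo t ht |>.differentiableAt hD),
      deriv_comp _ hdt (hd.differentiableAt hD), h0 t ht, hh0, mul_comm]

end ContSemigroupOn

/-- Proposition 6: if `S₁` is a group of elliptic automorphisms and the elements of `S₂`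
are not automorphisms, then commutativity of `F₁` and `G₁` implies that `F₁` commutes
with every `G_t`. -/
theorem elliptic_group_element_commutes_with_semigroup
    (τ : ℂ) (hτ : τ ∈ unitDisk) (φ : ℝ)
    (G : ℝ → ℂ → ℂ) (hSG : ContSemigroupOn G)
    (hGaut : ∀ t : ℝ, 0 < t → ¬ IsDiskAutomorphism (G t))
    (hcomm : ∀ z ∈ unitDisk,
      mobius τ (Complex.exp (Complex.I * φ) * mobius τ (G 1 z))
        = G 1 (mobius τ (Complex.exp (Complex.I * φ) * mobius τ z))) :
    ∀ t : ℝ, 0 ≤ t → ∀ z ∈ unitDisk,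
      mobius τ (Complex.exp (Complex.I * φ) * mobius τ (G t z))
        = G t (mobius τ (Complex.exp (Complex.I * φ) * mobius τ z)) := by
  set e := Complex.exp (Complex.I * φ)
  have hR : MapsTo (e * ·) unitDisk unitDisk := fun z hz =>
    mul_mem_unitDisk (by rw [Complex.norm_exp_I_mul_ofReal]) hz
  set g : ℝ → ℂ → ℂ := fun t => conjMobius τ (G t)
  have hg : ContSemigroupOn g := hSG.conjMobius hτ
  have hg1 : ∀ w ∈ unitDisk, g 1 (e * w) = e * g 1 w :=
    commute_conjMobius hτ hR (hSG.maps 1 zero_le_one) hcomm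
  intro t ht
  suffices h : ∀ w ∈ unitDisk, e * g t w = g t (e * w) from
    commute_conjMobius hτ (hSG.maps t ht) hR fun w hw => (h w hw).symm
  by_cases he1 : e = 1
  · simp [he1]
  have h10 : g 1 0 = 0 := by
    have h := hg1 0 zero_mem_unitDisk
    rw [mul_zero] at h
    exact (mul_eq_zero.1 (by linear_combination -h : (e - 1) * g 1 0 = 0)).resolve_left
      (sub_ne_zero.2 he1)
  have hd := hg.holo 1 zero_le_one
  have hm := hg.maps 1 zero_le_one
  have hnaut : ¬ IsDiskAutomorphism (g 1) := fun h =>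
    hGaut 1 one_pos (h.of_conjMobius hτ (hSG.maps 1 zero_le_one))
  have hfix : ∀ s, 0 ≤ s → g s 0 = 0 := fun s hs => hg.apply_zero_eq_zero zero_le_one h10
    (fun _ hw => eq_zero_of_apply_eq_self_of_not_isDiskAutomorphism hd hm h10 hnaut hw) hs
  exact hg.commute_of_commute_one hfix
    (norm_deriv_lt_one_of_not_isDiskAutomorphism hd hm h10 hnaut)
    (differentiableOn_id.const_mul e) hR (mul_zero e) (fun z hz => (hg1 z hz).symm) ht
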